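/- arXiv:1203.2569 — 7 statements merged into one kernel-verified Lean document; each statement's English description precedes it below -/
import Mathlib

section
/- If p, q, r ∈ [0,1] satisfy |p + q − 1| ≤ r ≤ 1 − |p − q|, then there exists a finite probability space (Ω, μ) and events A, B, C with μ(A) = μ(B) = μ(C) = 1/2 such that p = μ(A ∩ B)/μ(B), q = μ(B ∩ C)/μ(C), and r = μ(A ∩ C)/μ(C). -/
/-!
The four inequalities `p + q + r ≥ 1`, `p + q - r ≤ 1`, `p - q + r ≤ 1`, `-p + q + r ≤ 1`
packed into the hypotheses say that `(p, q, r)` lies in the tetrahedron with vertices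
`(1, 1, 1)`, `(1, 0, 0)`, `(0, 1, 0)`, `(0, 0, 1)`. Each vertex is realized on a two-point space
with both points of mass `1/2` (for `(1, 0, 0)`: `A = B = {a}`, `C = {b}`, and so on), and the
mixture of these four spaces with the barycentric coordinates of `(p, q, r)` as mixing weights
realizes `(p, q, r)`, because every event involved has mass `1/2` in each component.
-/

open Finset

namespace Accardi

/-- Points `2k` and `2k + 1` form the two-point space of the `k`-th vertex, in the order
`(1, 1, 1)`, `(1, 0, 0)`, `(0, 1, 0)`, `(0, 0, 1)`; each carries half the barycentric
coordinate of `(p, q, r)` at that vertex. -/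
noncomputable def weight (p q r : ℝ) : Fin 8 → ℝ :=
  ![(p + q + r - 1) / 4, (p + q + r - 1) / 4, (1 + p - q - r) / 4, (1 + p - q - r) / 4,
    (1 - p + q - r) / 4, (1 - p + q - r) / 4, (1 - p - q + r) / 4, (1 - p - q + r) / 4]

def eventA : Finset (Fin 8) := {0, 2, 5, 6}

def eventB : Finset (Fin 8) := {0, 2, 4, 7}

def eventC : Finset (Fin 8) := {0, 3, 4, 6}

theorem weight_nonneg {p q r : ℝ} (h1 : |p + q - 1| ≤ r) (h2 : r ≤ 1 - |p - q|) (i : Fin 8) :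
    0 ≤ weight p q r i := by
  obtain ⟨h1l, h1r⟩ := abs_le.mp h1
  obtain ⟨h2l, h2r⟩ := abs_le.mp (le_sub_comm.mp h2)
  fin_cases i <;> simp only [weight, Fin.reduceFinMk, Matrix.cons_val] <;> linarith

variable (p q r : ℝ)

theorem sum_weight : ∑ i, weight p q r i = 1 := by
  simp only [weight, Fin.sum_univ_eight, Matrix.cons_val_zero, Matrix.cons_val_one,
    Matrix.cons_val]
  ring

theorem sum_weight_eventA : ∑ i ∈ eventA, weight p q r i = 1 / 2 := by
  simp only [eventA, weight, mem_insert, mem_singleton, Fin.reduceEq, or_self,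
    not_false_eq_true, sum_insert, sum_singleton, Matrix.cons_val_zero, Matrix.cons_val]
  ring

theorem sum_weight_eventB : ∑ i ∈ eventB, weight p q r i = 1 / 2 := by
  simp only [eventB, weight, mem_insert, mem_singleton, Fin.reduceEq, or_self,
    not_false_eq_true, sum_insert, sum_singleton, Matrix.cons_val_zero, Matrix.cons_val]
  ring

theorem sum_weight_eventC : ∑ i ∈ eventC, weight p q r i = 1 / 2 := by
  simp only [eventC, weight, mem_insert, mem_singleton, Fin.reduceEq, or_self,
    not_false_eq_true, sum_insert, sum_singleton, Matrix.cons_val_zero, Matrix.cons_val]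
  ring

theorem sum_weight_eventA_inter_eventB : ∑ i ∈ eventA ∩ eventB, weight p q r i = p / 2 := by
  rw [show eventA ∩ eventB = {0, 2} by decide]
  simp only [weight, mem_singleton, Fin.reduceEq, not_false_eq_true, sum_insert, sum_singleton,
    Matrix.cons_val_zero, Matrix.cons_val]
  ring

theorem sum_weight_eventB_inter_eventC : ∑ i ∈ eventB ∩ eventC, weight p q r i = q / 2 := by
  rw [show eventB ∩ eventC = {0, 4} by decide]
  simp only [weight, mem_singleton, Fin.reduceEq, not_false_eq_true, sum_insert, sum_singleton,
    Matrix.cons_val_zero, Matrix.cons_val]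
  ring

theorem sum_weight_eventA_inter_eventC : ∑ i ∈ eventA ∩ eventC, weight p q r i = r / 2 := by
  rw [show eventA ∩ eventC = {0, 6} by decide]
  simp only [weight, mem_singleton, Fin.reduceEq, not_false_eq_true, sum_insert, sum_singleton,
    Matrix.cons_val_zero, Matrix.cons_val]
  ring

end Accardi

open Accardi

theorem stmt_1_general (p q r : ℝ)
    (h1 : |p + q - 1| ≤ r) (h2 : r ≤ 1 - |p - q|) :
    ∃ (n : ℕ) (w : Fin n → ℝ), (∀ i, 0 ≤ w i) ∧ (∑ i, w i) = 1 ∧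
      ∃ A B C : Finset (Fin n),
        (∑ i ∈ A, w i) = 1/2 ∧ (∑ i ∈ B, w i) = 1/2 ∧ (∑ i ∈ C, w i) = 1/2 ∧
        p = (∑ i ∈ A ∩ B, w i) / (∑ i ∈ B, w i) ∧
        q = (∑ i ∈ B ∩ C, w i) / (∑ i ∈ C, w i) ∧
        r = (∑ i ∈ A ∩ C, w i) / (∑ i ∈ C, w i) := by
  refine ⟨8, weight p q r, weight_nonneg h1 h2, sum_weight p q r, eventA, eventB, eventC,
    sum_weight_eventA p q r, sum_weight_eventB p q r, sum_weight_eventC p q r, ?_, ?_, ?_⟩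
  · rw [sum_weight_eventA_inter_eventB, sum_weight_eventB]; ring
  · rw [sum_weight_eventB_inter_eventC, sum_weight_eventC]; ring
  · rw [sum_weight_eventA_inter_eventC, sum_weight_eventC]; ring

theorem stmt_1 (p q r : ℝ) (hp : p ∈ Set.Icc (0:ℝ) 1) (hq : q ∈ Set.Icc (0:ℝ) 1)
    (hr : r ∈ Set.Icc (0:ℝ) 1)
    (h1 : |p + q - 1| ≤ r) (h2 : r ≤ 1 - |p - q|) :
    ∃ (n : ℕ) (w : Fin n → ℝ), (∀ i, 0 ≤ w i) ∧ (∑ i, w i) = 1 ∧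
      ∃ A B C : Finset (Fin n),
        (∑ i ∈ A, w i) = 1/2 ∧ (∑ i ∈ B, w i) = 1/2 ∧ (∑ i ∈ C, w i) = 1/2 ∧
        p = (∑ i ∈ A ∩ B, w i) / (∑ i ∈ B, w i) ∧
        q = (∑ i ∈ B ∩ C, w i) / (∑ i ∈ C, w i) ∧
        r = (∑ i ∈ A ∩ C, w i) / (∑ i ∈ C, w i) :=
  stmt_1_general p q r h1 h2
end

section
/- If p, q, r ∈ [0,1] satisfy (√(pq) − √((1−p)(1−q)))² ≤ r ≤ (√(pq) + √((1−p)(1−q)))², then there exist unit vectors a, b, c in ℂ² such that p = |⟨a,b⟩|², q = |⟨b,c⟩|², and r = |⟨a,c⟩|². -/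
/-!
Take `b = e₁`, `a = (√p, √(1-p))` and `c = (√q, √(1-q) z)` with `|z| = 1`. Then `|⟨a,b⟩|² = p`,
`|⟨b,c⟩|² = q` and `|⟨a,c⟩|² = |√(pq) + √((1-p)(1-q)) z|²`. As `z = e^{iθ}` runs over the upper
half circle, the last quantity moves continuously from `(√(pq) + √((1-p)(1-q)))²` to
`(√(pq) - √((1-p)(1-q)))²`, so it takes the value `r` by the intermediate value theorem.
-/

open scoped InnerProductSpace ComplexConjugate

theorem exists_norm_eq_one_sq_norm_add_mul_eq (A B r : ℝ) (h₁ : (A - B) ^ 2 ≤ r)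
    (h₂ : r ≤ (A + B) ^ 2) : ∃ z : ℂ, ‖z‖ = 1 ∧ ‖(A : ℂ) + B * z‖ ^ 2 = r := by
  let f : ℝ → ℝ := fun θ ↦ ‖(A : ℂ) + B * Complex.exp (θ * Complex.I)‖ ^ 2
  have hf : ContinuousOn f (Set.Icc 0 Real.pi) := by fun_prop
  have hf0 : f 0 = (A + B) ^ 2 := by
    simp [f, ← Complex.ofReal_add, Complex.norm_real]
  have hfπ : f Real.pi = (A - B) ^ 2 := by
    simp [f, ← sub_eq_add_neg, ← Complex.ofReal_sub, Complex.norm_real]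
  obtain ⟨θ, -, hθ⟩ := intermediate_value_Icc' Real.pi_pos.le hf ⟨hfπ ▸ h₁, hf0 ▸ h₂⟩
  exact ⟨_, Complex.norm_exp_ofReal_mul_I θ, hθ⟩

noncomputable def twoLevelState (x : ℝ) (z : ℂ) : EuclideanSpace ℂ (Fin 2) :=
  !₂[(√x : ℂ), (√(1 - x) : ℂ) * z]

theorem norm_twoLevelState {x : ℝ} (hx : x ∈ Set.Icc (0 : ℝ) 1) {z : ℂ} (hz : ‖z‖ = 1) :
    ‖twoLevelState x z‖ = 1 := by
  obtain ⟨hx0, hx1⟩ := hx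
  simp [twoLevelState, EuclideanSpace.norm_eq, Fin.sum_univ_two, Complex.norm_real, hz,
    Real.sq_sqrt hx0, Real.sq_sqrt (sub_nonneg.2 hx1)]

theorem inner_twoLevelState (x y : ℝ) (w z : ℂ) :
    ⟪twoLevelState x w, twoLevelState y z⟫_ℂ =
      (√x * √y : ℝ) + (√(1 - x) * √(1 - y) : ℝ) * (conj w * z) := by
  simp only [twoLevelState, EuclideanSpace.inner_eq_star_dotProduct, dotProduct, Pi.star_apply,
    RCLike.star_def, Fin.sum_univ_two, Matrix.cons_val_zero, Matrix.cons_val_one,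
    Matrix.cons_val_fin_one, Complex.conj_ofReal, map_mul, Complex.ofReal_mul]
  ring

theorem stmt_4_general (p q r : ℝ) (hp : p ∈ Set.Icc (0:ℝ) 1) (hq : q ∈ Set.Icc (0:ℝ) 1)
    (h1 : (Real.sqrt (p * q) - Real.sqrt ((1 - p) * (1 - q))) ^ 2 ≤ r)
    (h2 : r ≤ (Real.sqrt (p * q) + Real.sqrt ((1 - p) * (1 - q))) ^ 2) :
    ∃ a b c : EuclideanSpace ℂ (Fin 2), ‖a‖ = 1 ∧ ‖b‖ = 1 ∧ ‖c‖ = 1 ∧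
      p = ‖⟪a, b⟫_ℂ‖ ^ 2 ∧ q = ‖⟪b, c⟫_ℂ‖ ^ 2 ∧ r = ‖⟪a, c⟫_ℂ‖ ^ 2 := by
  obtain ⟨z, hz, hr⟩ := exists_norm_eq_one_sq_norm_add_mul_eq _ _ r h1 h2
  refine ⟨twoLevelState p 1, twoLevelState 1 1, twoLevelState q z, norm_twoLevelState hp norm_one,
    norm_twoLevelState (Set.right_mem_Icc.2 zero_le_one) norm_one, norm_twoLevelState hq hz,
    ?_, ?_, ?_⟩
  · simp [inner_twoLevelState, Real.sq_sqrt hp.1]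
  · simp [inner_twoLevelState, Real.sq_sqrt hq.1]
  · rw [inner_twoLevelState, ← Real.sqrt_mul hp.1, ← Real.sqrt_mul (sub_nonneg.2 hp.2), map_one,
      one_mul, hr]

theorem stmt_4 (p q r : ℝ) (hp : p ∈ Set.Icc (0:ℝ) 1) (hq : q ∈ Set.Icc (0:ℝ) 1)
    (hr : r ∈ Set.Icc (0:ℝ) 1)
    (h1 : (Real.sqrt (p * q) - Real.sqrt ((1 - p) * (1 - q))) ^ 2 ≤ r)
    (h2 : r ≤ (Real.sqrt (p * q) + Real.sqrt ((1 - p) * (1 - q))) ^ 2) :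
    ∃ a b c : EuclideanSpace ℂ (Fin 2), ‖a‖ = 1 ∧ ‖b‖ = 1 ∧ ‖c‖ = 1 ∧
      p = ‖⟪a, b⟫_ℂ‖ ^ 2 ∧ q = ‖⟪b, c⟫_ℂ‖ ^ 2 ∧ r = ‖⟪a, c⟫_ℂ‖ ^ 2 :=
  stmt_4_general p q r hp hq h1 h2
end

section
/- If p, q, r ∈ [0,1] and there exist unit vectors a, b, c in ℝ² with p = ⟨a,b⟩², q = ⟨b,c⟩², r = ⟨a,c⟩², then r = (√(pq) − √((1−p)(1−q)))² or r = (√(pq) + √((1−p)(1−q)))². -/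
/-! With `b` a unit vector of an oriented Euclidean plane, `x ↦ (⟪b, x⟫, ω b x)` are orthonormal
coordinates (`ω` the area form), so `⟪a, c⟫ = ⟪a, b⟫ ⟪b, c⟫ + ω b a · ω b c`, where the squares of
the two summands are `p q` and `(1 - p) (1 - q)`. Squaring, `r` is `(√(pq) ± √((1-p)(1-q)))²`
with the sign of the product of the two summands. -/

open scoped InnerProductSpace

theorem exists_inner_eq_inner_mul_inner_add_mul {E : Type*} [NormedAddCommGroup E]
    [InnerProductSpace ℝ E] (hE : Module.finrank ℝ E = 2) {b : E} (hb : ‖b‖ = 1) (a c : E) :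
    ∃ s t : ℝ, ⟪a, b⟫_ℝ ^ 2 + s ^ 2 = ‖a‖ ^ 2 ∧ ⟪b, c⟫_ℝ ^ 2 + t ^ 2 = ‖c‖ ^ 2 ∧
      ⟪a, c⟫_ℝ = ⟪a, b⟫_ℝ * ⟪b, c⟫_ℝ + s * t := by
  have : Fact (Module.finrank ℝ E = 2) := ⟨hE⟩
  have : FiniteDimensional ℝ E := Module.finite_of_finrank_eq_succ hE
  let o : Orientation ℝ E (Fin 2) := (Module.finBasisOfFinrankEq ℝ E hE).orientation
  refine ⟨o.areaForm b a, o.areaForm b c, ?_, ?_, ?_⟩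
  · simpa [real_inner_comm, hb] using o.inner_sq_add_areaForm_sq b a
  · simpa [hb] using o.inner_sq_add_areaForm_sq b c
  · simpa [real_inner_comm, hb] using (o.inner_mul_inner_add_areaForm_mul_areaForm b a c).symm

theorem sq_add_eq_sq_abs_sub_abs_or_sq_abs_add_abs (s t : ℝ) :
    (s + t) ^ 2 = (|s| - |t|) ^ 2 ∨ (s + t) ^ 2 = (|s| + |t|) ^ 2 := by
  have hst : |s| * |t| = |s * t| := (abs_mul s t).symm
  rcases abs_choice (s * t) with h | h
  · right; nlinarith [sq_abs s, sq_abs t]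
  · left; nlinarith [sq_abs s, sq_abs t]

theorem stmt_5_general (p q r : ℝ)
    (a b c : EuclideanSpace ℝ (Fin 2)) (ha : ‖a‖ = 1) (hb : ‖b‖ = 1) (hc : ‖c‖ = 1)
    (hpab : p = ⟪a, b⟫_ℝ ^ 2) (hqbc : q = ⟪b, c⟫_ℝ ^ 2) (hrac : r = ⟪a, c⟫_ℝ ^ 2) :
    r = (Real.sqrt (p * q) - Real.sqrt ((1 - p) * (1 - q))) ^ 2 ∨
    r = (Real.sqrt (p * q) + Real.sqrt ((1 - p) * (1 - q))) ^ 2 := by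
  obtain ⟨s, t, hs, ht, hac⟩ :=
    exists_inner_eq_inner_mul_inner_add_mul finrank_euclideanSpace_fin hb a c
  have hp : 1 - p = s ^ 2 := by rw [ha] at hs; linarith
  have hq : 1 - q = t ^ 2 := by rw [hc] at ht; linarith
  have sqrt_sq_mul_sq (x y : ℝ) : Real.sqrt (x ^ 2 * y ^ 2) = |x * y| := by
    rw [← mul_pow, Real.sqrt_sq_eq_abs]
  rw [hp, hq, hpab, hqbc, hrac, hac, sqrt_sq_mul_sq, sqrt_sq_mul_sq]
  exact sq_add_eq_sq_abs_sub_abs_or_sq_abs_add_abs _ _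

theorem stmt_5 (p q r : ℝ) (hp : p ∈ Set.Icc (0:ℝ) 1) (hq : q ∈ Set.Icc (0:ℝ) 1)
    (hr : r ∈ Set.Icc (0:ℝ) 1)
    (a b c : EuclideanSpace ℝ (Fin 2)) (ha : ‖a‖ = 1) (hb : ‖b‖ = 1) (hc : ‖c‖ = 1)
    (hpab : p = ⟪a, b⟫_ℝ ^ 2) (hqbc : q = ⟪b, c⟫_ℝ ^ 2) (hrac : r = ⟪a, c⟫_ℝ ^ 2) :
    r = (Real.sqrt (p * q) - Real.sqrt ((1 - p) * (1 - q))) ^ 2 ∨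
    r = (Real.sqrt (p * q) + Real.sqrt ((1 - p) * (1 - q))) ^ 2 :=
  stmt_5_general p q r a b c ha hb hc hpab hqbc hrac
end

section
/- If p, q, r ∈ [0,1] satisfy |p + q − 1| ≤ r ≤ 1 − |p − q|, then they also satisfy (√(pq) − √((1−p)(1−q)))² ≤ r ≤ (√(pq) + √((1−p)(1−q)))². -/
/-!
Put `a = √(pq)`, `b = √((1-p)(1-q))`. For nonnegative `a, b` one has `(a - b)² ≤ |a² - b²|`,
and `a² - b² = p + q - 1`, which gives the lower bound. For the upper bound, the
Brahmagupta–Fibonacci identity gives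
`(√(pq) + √((1-p)(1-q)))² = 1 - (√(p(1-q)) - √((1-p)q))²`, and the same inequality, applied to
`p(1-q)` and `(1-p)q` whose difference is `p - q`, bounds the subtracted square by `|p - q|`.
-/

theorem sub_sq_le_abs_sq_sub_sq {α : Type*} [CommRing α] [LinearOrder α] [IsStrictOrderedRing α]
    {a b : α} (ha : 0 ≤ a) (hb : 0 ≤ b) : (a - b) ^ 2 ≤ |a ^ 2 - b ^ 2| :=
  calc (a - b) ^ 2 = |a - b| * |a - b| := by rw [← sq, sq_abs]
    _ ≤ |a - b| * (a + b) :=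
      mul_le_mul_of_nonneg_left (abs_sub_le_iff.2 ⟨by linarith, by linarith⟩) (abs_nonneg _)
    _ = |a ^ 2 - b ^ 2| := by rw [sq_sub_sq, abs_mul, abs_of_nonneg (add_nonneg ha hb), mul_comm]

theorem Real.sqrt_sub_sqrt_sq_le_abs_sub {x y : ℝ} (hx : 0 ≤ x) (hy : 0 ≤ y) :
    (√x - √y) ^ 2 ≤ |x - y| := by
  simpa only [Real.sq_sqrt hx, Real.sq_sqrt hy] using
    sub_sq_le_abs_sq_sub_sq (Real.sqrt_nonneg x) (Real.sqrt_nonneg y)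

theorem Real.sqrt_mul_add_sqrt_mul_sq_add_sqrt_mul_sub_sqrt_mul_sq {p q p' q' : ℝ}
    (hp : 0 ≤ p) (hq : 0 ≤ q) (hp' : 0 ≤ p') (hq' : 0 ≤ q') :
    (√(p * q) + √(p' * q')) ^ 2 + (√(p * q') - √(p' * q)) ^ 2 = (p + p') * (q + q') := by
  rw [Real.sqrt_mul hp, Real.sqrt_mul hp', Real.sqrt_mul hp, Real.sqrt_mul hp']
  linear_combination (√q ^ 2 + √q' ^ 2) * (Real.sq_sqrt hp + Real.sq_sqrt hp') +
    (p + p') * (Real.sq_sqrt hq + Real.sq_sqrt hq')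

theorem stmt_6_general (p q r : ℝ) (hp : p ∈ Set.Icc (0:ℝ) 1) (hq : q ∈ Set.Icc (0:ℝ) 1)
    (h1 : |p + q - 1| ≤ r) (h2 : r ≤ 1 - |p - q|) :
    (Real.sqrt (p * q) - Real.sqrt ((1 - p) * (1 - q))) ^ 2 ≤ r ∧
    r ≤ (Real.sqrt (p * q) + Real.sqrt ((1 - p) * (1 - q))) ^ 2 := by
  obtain ⟨hp0, hp1⟩ := hp
  obtain ⟨hq0, hq1⟩ := hq
  have hp' : 0 ≤ 1 - p := sub_nonneg.2 hp1
  have hq' : 0 ≤ 1 - q := sub_nonneg.2 hq1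
  constructor
  · calc _ ≤ |p * q - (1 - p) * (1 - q)| :=
          Real.sqrt_sub_sqrt_sq_le_abs_sub (mul_nonneg hp0 hq0) (mul_nonneg hp' hq')
      _ = |p + q - 1| := by congr 1; ring
      _ ≤ r := h1
  · have identity :=
      Real.sqrt_mul_add_sqrt_mul_sq_add_sqrt_mul_sub_sqrt_mul_sq hp0 hq0 hp' hq'
    calc r ≤ 1 - |p * (1 - q) - (1 - p) * q| := by
          rwa [show p * (1 - q) - (1 - p) * q = p - q by ring]
      _ ≤ 1 - (√(p * (1 - q)) - √((1 - p) * q)) ^ 2 :=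
          sub_le_sub_left
            (Real.sqrt_sub_sqrt_sq_le_abs_sub (mul_nonneg hp0 hq') (mul_nonneg hp' hq0)) 1
      _ = _ := by linear_combination -identity

theorem stmt_6 (p q r : ℝ) (hp : p ∈ Set.Icc (0:ℝ) 1) (hq : q ∈ Set.Icc (0:ℝ) 1)
    (hr : r ∈ Set.Icc (0:ℝ) 1)
    (h1 : |p + q - 1| ≤ r) (h2 : r ≤ 1 - |p - q|) :
    (Real.sqrt (p * q) - Real.sqrt ((1 - p) * (1 - q))) ^ 2 ≤ r ∧
    r ≤ (Real.sqrt (p * q) + Real.sqrt ((1 - p) * (1 - q))) ^ 2 :=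
  stmt_6_general p q r hp hq h1 h2
end

section
/- Let p: Fin 3 → ℝ and p₂: Fin 3 → Fin 3 → ℝ be candidate single and pairwise probabilities with n = 2 events A₁, A₂ (taking indices 1,2 and pair (1,2)). There exist a finite probability space and events A₁, A₂ with μ(Aᵢ) = p(i) and μ(A₁ ∩ A₂) = p(1,2) if and only if 0 ≤ p(1,2) ≤ p(1) ≤ 1, 0 ≤ p(1,2) ≤ p(2) ≤ 1, and 0 ≤ p(1) + p(2) − p(1,2) ≤ 1. -/
/-!
Necessity: probabilities are monotone under inclusion, and inclusion–exclusion gives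
`μ(A₁ ∪ A₂) = p(1) + p(2) − p(1,2)`, which must lie in `[0, 1]`.
Sufficiency: put the weights `p(1,2)`, `p(1) − p(1,2)`, `p(2) − p(1,2)` and
`1 − (p(1) + p(2) − p(1,2))` on the four atoms `A₁ ∩ A₂`, `A₁ \ A₂`, `A₂ \ A₁`, `(A₁ ∪ A₂)ᶜ`;
the inequalities say exactly that these weights are nonnegative.
-/

open Finset

def InCorrelationPolytope (p1 p2 p12 : ℝ) : Prop :=
  0 ≤ p12 ∧ p12 ≤ p1 ∧ p1 ≤ 1 ∧ p12 ≤ p2 ∧ p2 ≤ 1 ∧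
    0 ≤ p1 + p2 - p12 ∧ p1 + p2 - p12 ≤ 1

theorem inCorrelationPolytope_of_weights {ι : Type*} [Fintype ι] [DecidableEq ι]
    {w : ι → ℝ} (hw : ∀ i, 0 ≤ w i) (hsum : ∑ i, w i = 1) (A B : Finset ι) :
    InCorrelationPolytope (∑ i ∈ A, w i) (∑ i ∈ B, w i) (∑ i ∈ A ∩ B, w i) := by
  have mono {S T : Finset ι} (h : S ⊆ T) : ∑ i ∈ S, w i ≤ ∑ i ∈ T, w i :=
    sum_le_sum_of_subset_of_nonneg h fun i _ _ => hw i
  have le_one (S : Finset ι) : ∑ i ∈ S, w i ≤ 1 := hsum ▸ mono (subset_univ S)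
  have inclusion_exclusion := sum_union_inter (s₁ := A) (s₂ := B) (f := w)
  have union_nonneg : 0 ≤ ∑ i ∈ A ∪ B, w i := sum_nonneg fun i _ => hw i
  exact ⟨sum_nonneg fun i _ => hw i, mono inter_subset_left, le_one A,
    mono inter_subset_right, le_one B, by linarith [le_one (A ∪ B)], by linarith [le_one (A ∪ B)]⟩

/-- Weights of the atoms `A₁ ∩ A₂`, `A₁ \ A₂`, `A₂ \ A₁`, `(A₁ ∪ A₂)ᶜ`, indexed by `0, 1, 2, 3`;
`A₁ = {0, 1}` and `A₂ = {0, 2}`. -/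
def atomWeights (p1 p2 p12 : ℝ) : Fin 4 → ℝ :=
  ![p12, p1 - p12, p2 - p12, 1 - (p1 + p2 - p12)]

theorem atomWeights_nonneg {p1 p2 p12 : ℝ} (h : InCorrelationPolytope p1 p2 p12) (i : Fin 4) :
    0 ≤ atomWeights p1 p2 p12 i := by
  obtain ⟨h12, h1, -, h2, -, -, hU⟩ := h
  fin_cases i <;> simp [atomWeights] <;> linarith

theorem sum_atomWeights (p1 p2 p12 : ℝ) : ∑ i, atomWeights p1 p2 p12 i = 1 := by
  simp only [atomWeights, Fin.sum_univ_four, Fin.isValue, Matrix.cons_val_zero,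
    Matrix.cons_val_one, Matrix.cons_val]
  ring

theorem sum_atomWeights_first (p1 p2 p12 : ℝ) :
    ∑ i ∈ {0, 1}, atomWeights p1 p2 p12 i = p1 := by
  simp [atomWeights]

theorem sum_atomWeights_second (p1 p2 p12 : ℝ) :
    ∑ i ∈ {0, 2}, atomWeights p1 p2 p12 i = p2 := by
  simp [atomWeights]

theorem sum_atomWeights_inter (p1 p2 p12 : ℝ) :
    ∑ i ∈ ({0, 1} ∩ {0, 2} : Finset (Fin 4)), atomWeights p1 p2 p12 i = p12 := by
  rw [show ({0, 1} ∩ {0, 2} : Finset (Fin 4)) = {0} by decide]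
  simp [atomWeights]

theorem stmt_15 (p1 p2 p12 : ℝ) :
    (∃ (n : ℕ) (w : Fin n → ℝ), (∀ i, 0 ≤ w i) ∧ (∑ i, w i) = 1 ∧
      ∃ A1 A2 : Finset (Fin n),
        (∑ i ∈ A1, w i) = p1 ∧ (∑ i ∈ A2, w i) = p2 ∧ (∑ i ∈ A1 ∩ A2, w i) = p12) ↔
    (0 ≤ p12 ∧ p12 ≤ p1 ∧ p1 ≤ 1 ∧ p12 ≤ p2 ∧ p2 ≤ 1 ∧
     0 ≤ p1 + p2 - p12 ∧ p1 + p2 - p12 ≤ 1) := by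
  change _ ↔ InCorrelationPolytope p1 p2 p12
  constructor
  · rintro ⟨n, w, hw, hsum, A1, A2, rfl, rfl, rfl⟩
    exact inCorrelationPolytope_of_weights hw hsum A1 A2
  · intro h
    exact ⟨4, atomWeights p1 p2 p12, atomWeights_nonneg h, sum_atomWeights p1 p2 p12,
      {0, 1}, {0, 2}, sum_atomWeights_first p1 p2 p12, sum_atomWeights_second p1 p2 p12,
      sum_atomWeights_inter p1 p2 p12⟩
end

section
/- If (p(1), p(2), p(3), p(1,2), p(1,3), p(2,3)) are the measures μ(Aᵢ) and μ(Aᵢ ∩ Aⱼ) of three events in a probability space, then p(1) − p(1,2) − p(1,3) + p(2,3) ≥ 0 (and symmetrically for the other two cyclic versions). -/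
open MeasureTheory

/-- Splitting `A` and `A ∩ B` along `C`, the part of `A ∩ B` inside `C` lies in `B ∩ C` and the
part outside `C` lies in `A \ C`. -/
theorem measure_inter_add_measure_inter_le {Ω : Type*} [MeasurableSpace Ω] (μ : Measure Ω)
    (A B : Set Ω) {C : Set Ω} (hC : MeasurableSet C) :
    μ (A ∩ B) + μ (A ∩ C) ≤ μ A + μ (B ∩ C) :=
  calc μ (A ∩ B) + μ (A ∩ C) = μ (A ∩ B ∩ C) + μ ((A ∩ B) \ C) + μ (A ∩ C) := by
        rw [measure_inter_add_sdiff _ hC]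
    _ ≤ μ (B ∩ C) + μ (A \ C) + μ (A ∩ C) := by
        gcongr μ ?_ + μ ?_ + _
        · exact Set.inter_subset_inter_left C Set.inter_subset_right
        · exact Set.sdiff_subset_sdiff_left Set.inter_subset_left
    _ = μ A + μ (B ∩ C) := by
        rw [add_assoc, measure_sdiff_add_inter _ hC, add_comm]

theorem measureReal_sub_sub_add_nonneg {Ω : Type*} [MeasurableSpace Ω] (μ : Measure Ω)
    [IsFiniteMeasure μ] (A B : Set Ω) {C : Set Ω} (hC : MeasurableSet C) :
    0 ≤ μ.real A - μ.real (A ∩ B) - μ.real (A ∩ C) + μ.real (B ∩ C) := by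
  have h : μ.real (A ∩ B) + μ.real (A ∩ C) ≤ μ.real A + μ.real (B ∩ C) := by
    simp only [measureReal_def]
    rw [← ENNReal.toReal_add (by finiteness) (by finiteness),
      ← ENNReal.toReal_add (by finiteness) (by finiteness)]
    exact ENNReal.toReal_mono (by finiteness) (measure_inter_add_measure_inter_le μ A B hC)
  linarith

theorem stmt_16_general {Ω : Type*} [MeasurableSpace Ω] (μ : Measure Ω) [IsProbabilityMeasure μ]
    (A1 A2 A3 : Set Ω) (h2 : MeasurableSet A2) (h3 : MeasurableSet A3) :
    (μ A1).toReal - (μ (A1 ∩ A2)).toReal - (μ (A1 ∩ A3)).toReal + (μ (A2 ∩ A3)).toReal ≥ 0 ∧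
    (μ A2).toReal - (μ (A1 ∩ A2)).toReal - (μ (A2 ∩ A3)).toReal + (μ (A1 ∩ A3)).toReal ≥ 0 ∧
    (μ A3).toReal - (μ (A1 ∩ A3)).toReal - (μ (A2 ∩ A3)).toReal + (μ (A1 ∩ A2)).toReal ≥ 0 := by
  have h₁ := measureReal_sub_sub_add_nonneg μ A1 A2 h3
  have h₂ := measureReal_sub_sub_add_nonneg μ A2 A1 h3
  have h₃ := measureReal_sub_sub_add_nonneg μ A3 A1 h2
  simp only [measureReal_def, Set.inter_comm A2 A1, Set.inter_comm A3 A1,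
    Set.inter_comm A3 A2] at h₁ h₂ h₃
  exact ⟨h₁, h₂, h₃⟩

theorem stmt_16 {Ω : Type*} [MeasurableSpace Ω] (μ : Measure Ω) [IsProbabilityMeasure μ]
    (A1 A2 A3 : Set Ω) (h1 : MeasurableSet A1) (h2 : MeasurableSet A2) (h3 : MeasurableSet A3) :
    (μ A1).toReal - (μ (A1 ∩ A2)).toReal - (μ (A1 ∩ A3)).toReal + (μ (A2 ∩ A3)).toReal ≥ 0 ∧
    (μ A2).toReal - (μ (A1 ∩ A2)).toReal - (μ (A2 ∩ A3)).toReal + (μ (A1 ∩ A3)).toReal ≥ 0 ∧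
    (μ A3).toReal - (μ (A1 ∩ A3)).toReal - (μ (A2 ∩ A3)).toReal + (μ (A1 ∩ A2)).toReal ≥ 0 :=
  stmt_16_general μ A1 A2 A3 h2 h3
end

section
/- A correlation vector p of single-event probabilities p(i) and pairwise probabilities p(i,j) for n events is realizable in a single finite probability space (i.e., there exist Ω, μ, and events A₁,…,Aₙ with μ(Aᵢ) = p(i), μ(Aᵢ ∩ Aⱼ) = p(i,j)) if and only if p is a convex combination of the 2ⁿ vertex correlation vectors p_b, b ∈ {0,1}ⁿ, where p_b(i) = bᵢ and p_b(i,j) = bᵢ·bⱼ. -/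
/-!
A weighted finite space with events `A i` induces, by pushing its weights forward along
`x ↦ (x ∈ A i)ᵢ`, a convex combination of the vertices `p_b`; conversely a convex
combination `∑ λ_b p_b` is realized on the space `{0,1}ⁿ` itself, with weights `λ` and
events `{b | bᵢ = 1}`.
-/

open Finset

section Pushforward

variable {Ω β R : Type*} [Fintype Ω] [DecidableEq β] [Semiring R]

def pushWeight (w : Ω → R) (f : Ω → β) (b : β) : R := ∑ x with f x = b, w x

theorem sum_pushWeight_mul [Fintype β] (w : Ω → R) (f : Ω → β) (g : β → R) :
    ∑ b, pushWeight w f b * g b = ∑ x, w x * g (f x) := by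
  rw [← Finset.sum_fiberwise univ f]
  refine sum_congr rfl fun b _ => ?_
  rw [pushWeight, sum_mul]
  exact sum_congr rfl fun x hx => by rw [(mem_filter.1 hx).2]

theorem sum_pushWeight [Fintype β] (w : Ω → R) (f : Ω → β) :
    ∑ b, pushWeight w f b = ∑ x, w x := by
  simpa using sum_pushWeight_mul w f 1

theorem pushWeight_nonneg [PartialOrder R] [IsOrderedAddMonoid R] {w : Ω → R}
    (hw : ∀ x, 0 ≤ w x) (f : Ω → β) (b : β) : 0 ≤ pushWeight w f b :=
  sum_nonneg fun x _ => hw x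

end Pushforward

section Correlation

variable {ι Ω R : Type*} [Fintype Ω] [DecidableEq Ω] [Semiring R]

def memPattern (A : ι → Finset Ω) (x : Ω) : ι → Bool := fun i => decide (x ∈ A i)

theorem sum_mem_eq_sum_mul_ite (w : Ω → R) (s : Finset Ω) :
    ∑ x ∈ s, w x = ∑ x, w x * (if x ∈ s then 1 else 0) := by
  simp [Finset.sum_ite_mem]

variable [Fintype ι] [DecidableEq ι]

theorem sum_pushWeight_mul_vertex (w : Ω → R) (A : ι → Finset Ω) (i : ι) :
    ∑ b, pushWeight w (memPattern A) b * (if b i then 1 else 0) = ∑ x ∈ A i, w x := by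
  rw [sum_pushWeight_mul, sum_mem_eq_sum_mul_ite w (A i)]
  simp [memPattern]

theorem sum_pushWeight_mul_vertex_mul_vertex (w : Ω → R) (A : ι → Finset Ω) (i j : ι) :
    ∑ b, pushWeight w (memPattern A) b * (if b i then 1 else 0) * (if b j then 1 else 0) =
      ∑ x ∈ A i ∩ A j, w x := by
  simp_rw [mul_assoc]
  rw [sum_pushWeight_mul, sum_mem_eq_sum_mul_ite w (A i ∩ A j)]
  simp only [memPattern, decide_eq_true_eq, ite_zero_mul_ite_zero, mul_one, ← mem_inter]

end Correlation

section Vertices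

variable {ι R : Type*} [Fintype ι] [DecidableEq ι] [Semiring R]

def coordEvent (i : ι) : Finset (ι → Bool) := {b | b i = true}

theorem sum_coordEvent (lam : (ι → Bool) → R) (i : ι) :
    ∑ b ∈ coordEvent i, lam b = ∑ b, lam b * (if b i then 1 else 0) := by
  simp [coordEvent, sum_filter]

theorem sum_coordEvent_inter (lam : (ι → Bool) → R) (i j : ι) :
    ∑ b ∈ coordEvent i ∩ coordEvent j, lam b =
      ∑ b, lam b * (if b i then 1 else 0) * (if b j then 1 else 0) := by
  rw [coordEvent, coordEvent, ← filter_and, sum_filter]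
  refine sum_congr rfl fun b _ => ?_
  cases b i <;> cases b j <;> simp

end Vertices

theorem stmt_18 (n : ℕ) (p1 : Fin n → ℝ) (p2 : Fin n → Fin n → ℝ) :
    (∃ (m : ℕ) (w : Fin m → ℝ), (∀ x, 0 ≤ w x) ∧ (∑ x, w x) = 1 ∧
      ∃ A : Fin n → Finset (Fin m),
        (∀ i, (∑ x ∈ A i, w x) = p1 i) ∧
        (∀ i j, i < j → (∑ x ∈ A i ∩ A j, w x) = p2 i j)) ↔
    (∃ lam : (Fin n → Bool) → ℝ, (∀ b, 0 ≤ lam b) ∧ (∑ b, lam b) = 1 ∧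
      (∀ i, p1 i = ∑ b, lam b * (if b i then 1 else 0)) ∧
      (∀ i j, i < j →
        p2 i j = ∑ b, lam b * (if b i then 1 else 0) * (if b j then 1 else 0))) := by
  constructor
  · rintro ⟨m, w, hw, hw1, A, hA1, hA2⟩
    refine ⟨pushWeight w (memPattern A), pushWeight_nonneg hw _, ?_, fun i => ?_,
      fun i j hij => ?_⟩
    · rw [sum_pushWeight, hw1]
    · rw [sum_pushWeight_mul_vertex, hA1]
    · rw [sum_pushWeight_mul_vertex_mul_vertex, hA2 i j hij]
  · rintro ⟨lam, hlam, hlam1, h1, h2⟩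
    let e := (Fintype.equivFin (Fin n → Bool)).symm
    refine ⟨_, lam ∘ e, fun x => hlam _, by rw [← hlam1]; exact e.sum_comp lam,
      fun i => (coordEvent i).map e.symm.toEmbedding, fun i => ?_, fun i j hij => ?_⟩
    · simp [sum_coordEvent, h1]
    · simp [← map_inter, sum_coordEvent_inter, h2 i j hij]
end
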